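/- arXiv:2303.03883 — 2 statements merged into one kernel-verified Lean document; each statement's English description precedes it below -/
import Mathlib

section
/- For real symmetric positive definite n×n matrices A and B, Tr(A) + Tr(B) − 2Tr(√(√A·B·√A)) ≥ 0, with equality if and only if A = B. -/
open Matrix BigOperators

open Classical in
noncomputable def msqrt {n : ℕ} (M : Matrix (Fin n) (Fin n) ℝ) : Matrix (Fin n) (Fin n) ℝ :=
  if h : M.PosSemidef then
    h.1.eigenvectorUnitary.1 * diagonal ((↑) ∘ (√·) ∘ h.1.eigenvalues) *
      (star h.1.eigenvectorUnitary : Matrix (Fin n) (Fin n) ℝ) else 0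

noncomputable def fnorm {n : ℕ} (A : Matrix (Fin n) (Fin n) ℝ) : ℝ :=
  Real.sqrt (∑ i, ∑ j, (A i j) ^ 2)

/-!
Write `S = √A`, `C = √B` and `T = √(S B S)`. Since `T² = (S C)(S C)ᴴ` and `T` is invertible,
the polar decomposition `S C = T U` has `U` orthogonal, so `Tr T = Tr (S C Uᴴ)` and
`Tr A + Tr B - 2 Tr T = ‖S - C Uᴴ‖²` (Frobenius norm). This is nonnegative, and it vanishes
only if `S = C Uᴴ`, whence `A = S Sᴴ = C Cᴴ = B`.
-/

theorem exists_mem_unitary_eq_mul_of_mul_self_eq {R : Type*} [Monoid R] [StarMul R]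
    [IsDedekindFiniteMonoid R] {t x : R} (ht : IsSelfAdjoint t) (ht' : IsUnit t)
    (h : t * t = x * star x) : ∃ u ∈ unitary R, x = t * u := by
  set s : R := ↑ht'.unit⁻¹
  have hst : s * t = 1 := ht'.val_inv_mul
  have hts : t * s = 1 := ht'.mul_val_inv
  have hunitary : s * x * star (s * x) = 1 := calc
    s * x * star (s * x) = s * (t * t) * star s := by rw [h, star_mul]; simp only [mul_assoc]
    _ = star (s * star t) := by rw [← mul_assoc, hst, one_mul, star_mul, star_star]
    _ = 1 := by rw [ht.star_eq, hst, star_one]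
  exact ⟨s * x, Unitary.mem_iff.mpr ⟨mul_eq_one_comm.mp hunitary, hunitary⟩,
    by rw [← mul_assoc, hts, one_mul]⟩

namespace CFC

variable {A : Type*} [PartialOrder A] [Ring A] [StarRing A] [TopologicalSpace A]
  [StarOrderedRing A] [Algebra ℝ A] [ContinuousFunctionalCalculus ℝ A IsSelfAdjoint]
  [NonnegSpectrumClass ℝ A] [IsSemitopologicalRing A] [T2Space A]

theorem sqrt_sqrt_mul_mul_sqrt_self {a : A} (ha : 0 ≤ a) : sqrt (sqrt a * a * sqrt a) = a := by
  nth_rw 2 [← sqrt_mul_sqrt_self a]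
  rw [← mul_assoc, mul_assoc (sqrt a * sqrt a), sqrt_mul_sqrt_self a, sqrt_mul_self a]

theorem exists_mem_unitary_sqrt_mul_sqrt_eq [IsDedekindFiniteMonoid A] {a b : A}
    (ha : IsStrictlyPositive a) (hb : IsStrictlyPositive b) :
    ∃ u ∈ unitary A, sqrt a * sqrt b = sqrt (sqrt a * b * sqrt a) * u := by
  have hsa : IsSelfAdjoint (sqrt a) := .of_nonneg (sqrt_nonneg a)
  have hsb : IsSelfAdjoint (sqrt b) := .of_nonneg (sqrt_nonneg b)
  have hconj : 0 ≤ sqrt a * b * sqrt a := hsa.conjugate_nonneg hb.nonneg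
  have hunit : IsUnit (sqrt (sqrt a * b * sqrt a)) :=
    (isUnit_sqrt_iff _ hconj).mpr ((ha.isUnit_cfcSqrt.mul hb.isUnit).mul ha.isUnit_cfcSqrt)
  refine exists_mem_unitary_eq_mul_of_mul_self_eq (.of_nonneg (sqrt_nonneg _)) hunit ?_
  rw [sqrt_mul_sqrt_self _ hconj, star_mul, hsa.star_eq, hsb.star_eq]
  nth_rw 1 [← sqrt_mul_sqrt_self b hb.nonneg]
  simp only [mul_assoc]

end CFC

open scoped MatrixOrder

namespace Matrix

variable {ι : Type*} [Fintype ι] [DecidableEq ι]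

theorem trace_conjTranspose_mul_self_sub_mul {R : Type*} [CommRing R] [StarRing R] [TrivialStar R]
    {S C V : Matrix ι ι R} (hS : S.IsHermitian) (hC : C.IsHermitian) (hV : V ∈ unitaryGroup ι R) :
    ((S - C * V)ᴴ * (S - C * V)).trace =
      (S * S).trace + (C * C).trace - 2 * (S * C * V).trace := by
  have hcross : (Vᴴ * C * S).trace = (S * C * V).trace := calc
    _ = ((S * C * V)ᴴ).trace := by
      rw [conjTranspose_mul, conjTranspose_mul, hS.eq, hC.eq, mul_assoc]
    _ = (S * C * V).trace := by rw [trace_conjTranspose, star_trivial]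
  have hquad : (Vᴴ * C * (C * V)).trace = (C * C).trace := by
    rw [trace_mul_comm, mul_assoc, ← mul_assoc V, ← star_eq_conjTranspose,
      mem_unitaryGroup_iff.mp hV, one_mul]
  rw [conjTranspose_sub, conjTranspose_mul, hS.eq, hC.eq, sub_mul, mul_sub, mul_sub, trace_sub,
    trace_sub, trace_sub, ← mul_assoc, hquad, mul_assoc, hcross, ← mul_assoc S C V]
  ring

noncomputable def buresDistSq (A B : Matrix ι ι ℝ) : ℝ :=
  A.trace + B.trace - 2 * (CFC.sqrt (CFC.sqrt A * B * CFC.sqrt A)).trace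

theorem PosDef.exists_mem_unitaryGroup_buresDistSq_eq {A B : Matrix ι ι ℝ} (hA : A.PosDef)
    (hB : B.PosDef) : ∃ V ∈ unitaryGroup ι ℝ, buresDistSq A B =
      ((CFC.sqrt A - CFC.sqrt B * V)ᴴ * (CFC.sqrt A - CFC.sqrt B * V)).trace := by
  obtain ⟨U, hU, hpolar⟩ :=
    CFC.exists_mem_unitary_sqrt_mul_sqrt_eq hA.isStrictlyPositive hB.isStrictlyPositive
  refine ⟨star U, Unitary.star_mem hU, ?_⟩
  rw [trace_conjTranspose_mul_self_sub_mul (CFC.sqrt_nonneg A).posSemidef.isHermitian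
    (CFC.sqrt_nonneg B).posSemidef.isHermitian (Unitary.star_mem hU),
    CFC.sqrt_mul_sqrt_self A hA.posSemidef.nonneg, CFC.sqrt_mul_sqrt_self B hB.posSemidef.nonneg,
    hpolar, mul_assoc, Unitary.mul_star_self_of_mem hU, mul_one, buresDistSq]

theorem PosDef.buresDistSq_nonneg {A B : Matrix ι ι ℝ} (hA : A.PosDef) (hB : B.PosDef) :
    0 ≤ buresDistSq A B := by
  obtain ⟨V, -, hV⟩ := hA.exists_mem_unitaryGroup_buresDistSq_eq hB
  exact hV ▸ (posSemidef_conjTranspose_mul_self _).trace_nonneg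

theorem PosSemidef.buresDistSq_self {A : Matrix ι ι ℝ} (hA : A.PosSemidef) :
    buresDistSq A A = 0 := by
  rw [buresDistSq, CFC.sqrt_sqrt_mul_mul_sqrt_self hA.nonneg]
  ring

theorem PosDef.buresDistSq_eq_zero_iff {A B : Matrix ι ι ℝ} (hA : A.PosDef) (hB : B.PosDef) :
    buresDistSq A B = 0 ↔ A = B := by
  refine ⟨fun h => ?_, fun h => h ▸ hA.posSemidef.buresDistSq_self⟩
  obtain ⟨V, hV, hBW⟩ := hA.exists_mem_unitaryGroup_buresDistSq_eq hB
  rw [hBW, trace_conjTranspose_mul_self_eq_zero_iff, sub_eq_zero] at h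
  have hSA : IsSelfAdjoint (CFC.sqrt A) := .of_nonneg (CFC.sqrt_nonneg A)
  have hSB : IsSelfAdjoint (CFC.sqrt B) := .of_nonneg (CFC.sqrt_nonneg B)
  calc A = CFC.sqrt A * star (CFC.sqrt A) := by
        rw [hSA.star_eq, CFC.sqrt_mul_sqrt_self A hA.posSemidef.nonneg]
    _ = CFC.sqrt B * (V * star V) * star (CFC.sqrt B) := by
        rw [h, star_mul, mul_assoc, mul_assoc, mul_assoc]
    _ = B := by
        rw [Unitary.mul_star_self_of_mem hV, mul_one, hSB.star_eq,
          CFC.sqrt_mul_sqrt_self B hB.posSemidef.nonneg]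

end Matrix

theorem msqrt_eq_sqrt {n : ℕ} {M : Matrix (Fin n) (Fin n) ℝ} (h : M.PosSemidef) :
    msqrt M = CFC.sqrt M := by
  rw [CFC.sqrt_eq_real_sqrt M h.nonneg, cfcₙ_eq_cfc, msqrt, dif_pos h, h.1.cfc_eq, IsHermitian.cfc]
  rfl

theorem stmt_10 {n : ℕ} (A B : Matrix (Fin n) (Fin n) ℝ)
    (hA : A.PosDef) (hB : B.PosDef) :
    0 ≤ A.trace + B.trace - 2 * (msqrt (msqrt A * B * msqrt A)).trace ∧
    (A.trace + B.trace - 2 * (msqrt (msqrt A * B * msqrt A)).trace = 0 ↔ A = B) := by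
  have hconj : (CFC.sqrt A * B * CFC.sqrt A).PosSemidef :=
    ((IsSelfAdjoint.of_nonneg (CFC.sqrt_nonneg A)).conjugate_nonneg hB.posSemidef.nonneg).posSemidef
  rw [msqrt_eq_sqrt hA.posSemidef, msqrt_eq_sqrt hconj, ← buresDistSq]
  exact ⟨hA.buresDistSq_nonneg hB, hA.buresDistSq_eq_zero_iff hB⟩
end

section
/- For a fixed real symmetric positive definite n×n matrix A, the function X ↦ ρ²(A,X) = Tr(A) + Tr(X) − 2Tr(√(√A·X·√A)) is convex on the cone of positive definite matrices. -/
open Matrix BigOperators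

/-!
With `B = √A`, the map `X ↦ B X B` is linear and preserves positive definiteness, so it suffices
that `Y ↦ Tr √Y` is concave on positive definite matrices. For `P = √Y`, `Q = √Z` and `a + b = 1`,
the matrix `M = a P + b Q` satisfies `M² = a Y + b Z - a b (P - Q)² ⪯ S²` with `S = √(a Y + b Z)`,
and `M Mᴴ ⪯ S²` forces `Tr M ≤ Tr S`.
-/

open scoped MatrixOrder

lemma smul_mul_self_add_smul_mul_self {𝕜 R : Type*} [CommRing 𝕜] [Ring R] [Algebra 𝕜 R]
    {a b : 𝕜} (hab : a + b = 1) (x y : R) :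
    a • (x * x) + b • (y * y) =
      (a • x + b • y) * (a • x + b • y) + (a * b) • ((x - y) * (x - y)) := by
  obtain rfl : b = 1 - a := eq_sub_of_add_eq' hab
  simp only [add_mul, mul_add, sub_mul, mul_sub, smul_mul_assoc, mul_smul_comm, smul_smul,
    smul_add, smul_sub]
  module

namespace Matrix

theorem convex_setOf_posDef {ι : Type*} : Convex ℝ {X : Matrix ι ι ℝ | X.PosDef} := by
  intro X hX Y hY a b ha hb hab
  rcases ha.eq_or_lt with rfl | ha
  · simpa [(zero_add b).symm.trans hab] using hY
  · exact (hX.smul ha).add_posSemidef (hY.posSemidef.smul hb)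

variable {ι : Type*} [Fintype ι] [DecidableEq ι]

theorem PosSemidef.trace_mul_nonneg {P Q : Matrix ι ι ℝ} (hP : P.PosSemidef)
    (hQ : Q.PosSemidef) : 0 ≤ (P * Q).trace := by
  obtain ⟨R, rfl⟩ := CStarAlgebra.nonneg_iff_eq_star_mul_self.mp hP.nonneg
  rw [star_eq_conjTranspose, Matrix.mul_assoc, trace_mul_comm]
  exact (hQ.mul_mul_conjTranspose_same R).trace_nonneg

/-- `0 ≤ Tr ((S - M)ᴴ S⁻¹ (S - M)) = Tr S - 2 Tr M + Tr (S⁻¹ M Mᴴ) ≤ 2 Tr S - 2 Tr M`. -/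
theorem trace_le_trace_of_mul_conjTranspose_le {S M : Matrix ι ι ℝ} (hS : S.PosDef)
    (h : M * Mᴴ ≤ S * S) : M.trace ≤ S.trace := by
  have hdet : IsUnit S.det := (isUnit_iff_isUnit_det S).mp hS.isUnit
  have hsq := (hS.inv.posSemidef.conjTranspose_mul_mul_same (S - M)).trace_nonneg
  have hgap := hS.inv.posSemidef.trace_mul_nonneg h
  simp only [conjTranspose_sub, hS.isHermitian.eq, sub_mul, mul_sub, Matrix.mul_assoc,
    nonsing_inv_mul _ hdet, Matrix.mul_one, mul_nonsing_inv_cancel_left _ _ hdet, trace_sub,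
    trace_conjTranspose, star_trivial] at hsq
  rw [mul_sub, trace_sub, ← Matrix.mul_assoc, nonsing_inv_mul _ hdet, Matrix.one_mul,
    ← Matrix.mul_assoc, trace_mul_comm] at hgap
  linarith

end Matrix

section msqrt

variable {n : ℕ}

theorem msqrt_posSemidef (M : Matrix (Fin n) (Fin n) ℝ) : (msqrt M).PosSemidef := by
  unfold msqrt
  split_ifs with hM
  · rw [star_eq_conjTranspose]
    exact (PosSemidef.diagonal fun i => by simp [Real.sqrt_nonneg]).mul_mul_conjTranspose_same _
  · exact .zero

theorem msqrt_mul_self {M : Matrix (Fin n) (Fin n) ℝ} (hM : M.PosSemidef) :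
    msqrt M * msqrt M = M := by
  set D := diagonal ((↑) ∘ (√·) ∘ hM.1.eigenvalues : Fin n → ℝ)
  have hDD : D * D = diagonal (RCLike.ofReal ∘ hM.1.eigenvalues) := by
    rw [diagonal_mul_diagonal]
    congr 1
    funext i
    simp [Real.mul_self_sqrt (hM.eigenvalues_nonneg i)]
  conv_rhs => rw [hM.1.spectral_theorem, Unitary.conjStarAlgAut_apply]
  rw [msqrt, dif_pos hM]
  simp only [Matrix.mul_assoc]
  rw [← Matrix.mul_assoc (star _) _, Unitary.coe_star_mul_self, Matrix.one_mul,
    ← Matrix.mul_assoc D D, hDD]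

theorem msqrt_posDef {M : Matrix (Fin n) (Fin n) ℝ} (hM : M.PosDef) : (msqrt M).PosDef := by
  refine (msqrt_posSemidef M).posDef_iff_det_ne_zero.mpr fun h => hM.det_pos.ne' ?_
  rw [← msqrt_mul_self hM.posSemidef, det_mul, h, zero_mul]

theorem concaveOn_trace_msqrt :
    ConcaveOn ℝ {Y : Matrix (Fin n) (Fin n) ℝ | Y.PosDef} (fun Y => (msqrt Y).trace) := by
  refine ⟨convex_setOf_posDef, fun Y hY Z hZ a b ha hb hab => ?_⟩
  have hYZ : (a • Y + b • Z).PosDef := convex_setOf_posDef hY hZ ha hb hab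
  set P := msqrt Y
  set Q := msqrt Z
  have hP : Pᴴ = P := (msqrt_posSemidef Y).isHermitian.eq
  have hQ : Qᴴ = Q := (msqrt_posSemidef Z).isHermitian.eq
  have hmix : (a • P + b • Q) * (a • P + b • Q)ᴴ ≤
      msqrt (a • Y + b • Z) * msqrt (a • Y + b • Z) := by
    rw [le_iff, msqrt_mul_self hYZ.posSemidef, ← msqrt_mul_self hY.posSemidef,
      ← msqrt_mul_self hZ.posSemidef, smul_mul_self_add_smul_mul_self hab, conjTranspose_add,
      conjTranspose_smul, conjTranspose_smul, hP, hQ, star_trivial, star_trivial,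
      add_sub_cancel_left]
    have hPQ := (posSemidef_self_mul_conjTranspose (P - Q)).smul (mul_nonneg ha hb)
    rwa [conjTranspose_sub, hP, hQ] at hPQ
  simpa [trace_add, trace_smul] using
    trace_le_trace_of_mul_conjTranspose_le (msqrt_posDef hYZ) hmix

end msqrt

theorem stmt_16 {n : ℕ} (A : Matrix (Fin n) (Fin n) ℝ) (hA : A.PosDef) :
    ConvexOn ℝ {X : Matrix (Fin n) (Fin n) ℝ | X.PosDef}
      (fun X => A.trace + X.trace - 2 * (msqrt (msqrt A * X * msqrt A)).trace) := by
  set B := msqrt A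
  have hB : B.PosDef := msqrt_posDef hA
  have hconj : {X : Matrix (Fin n) (Fin n) ℝ | X.PosDef} ⊆
      (LinearMap.mulRight ℝ B ∘ₗ LinearMap.mulLeft ℝ B) ⁻¹' {Y | Y.PosDef} := by
    intro X hX
    have hBXB := hX.conjTranspose_mul_mul_same (mulVec_injective_iff_isUnit.mpr hB.isUnit)
    rwa [hB.isHermitian.eq] at hBXB
  have hconc := (concaveOn_trace_msqrt.comp_linearMap _).subset hconj convex_setOf_posDef
  exact ((convexOn_const A.trace convex_setOf_posDef).add
    ((traceLinearMap _ ℝ ℝ).convexOn convex_setOf_posDef)).sub (hconc.smul zero_le_two)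
end
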